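/- Let (W,S) be a Coxeter system, J ⊆ S, and w ∈ W. If v is a Bruhat-minimal element of {u ∈ W : u ≰ w_max}, where w_max is the maximum-length representative of the coset wW_J, then v lies in W^J, i.e., Des(v) ∩ J = ∅. -/

import Mathlib

/-!
If some `s ∈ J` were a right descent of `v`, then `v s < v`, so `v s ≤ w_max` by minimality.
Since `w_max` has maximal length in `w W_J`, `s` is also a right descent of `w_max`, and the
lifting property of the Bruhat order gives `v = (v s) s ≤ w_max`, a contradiction.

The lifting property is proved for the chain description of the Bruhat order (descending
products by reflections), which agrees with the subword description by the strong exchange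
property. Strong exchange comes from the parity `η(w, t)` of the number of occurrences of the
reflection `t` in the right inversion sequence of a word for `w`; it is well defined because the
simple reflections act on `W × ZMod 2` by `(x, ε) ↦ (s x s, ε + [x = s])` and these involutions
satisfy the Coxeter relations.
-/

/-- The Bruhat order on a Coxeter group, via the subword property. -/
def BruhatLE {B W : Type*} [Group W] {M : CoxeterMatrix B} (cs : CoxeterSystem M W)
    (u w : W) : Prop :=
  ∃ l : List B, cs.IsReduced l ∧ cs.wordProd l = w ∧
    ∃ l' : List B, l'.Sublist l ∧ cs.wordProd l' = u

theorem mul_mul_inv_eq_iff_eq_inv_mul_mul {G : Type*} [Group G] (p x y : G) :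
    p * x * p⁻¹ = y ↔ x = p⁻¹ * y * p := by
  constructor <;> rintro rfl <;> group

namespace CoxeterSystem

variable {B W : Type*} [Group W] {M : CoxeterMatrix B} (cs : CoxeterSystem M W)

local prefix:100 "s" => cs.simple
local prefix:100 "π" => cs.wordProd
local prefix:100 "ℓ" => cs.length
local prefix:100 "ris" => cs.rightInvSeq

section ReflectionRepresentation

open scoped Classical

theorem simple_mul_mul_simple_eq_iff (i : B) (x y : W) :
    s i * x * s i = y ↔ x = s i * y * s i := by
  simpa using mul_mul_inv_eq_iff_eq_inv_mul_mul (s i) x y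

noncomputable def simplePerm (i : B) : Equiv.Perm (W × ZMod 2) :=
  Function.Involutive.toPerm (fun p ↦ (s i * p.1 * s i, p.2 + if p.1 = s i then 1 else 0)) <| by
    rintro ⟨x, ε⟩
    simp only [simple_mul_mul_simple_eq_iff, simple_mul_simple_self, one_mul, add_assoc,
      CharTwo.add_self_eq_zero, add_zero]
    simp [mul_assoc]

theorem simplePerm_apply (i : B) (x : W) (ε : ZMod 2) :
    cs.simplePerm i (x, ε) = (s i * x * s i, ε + if x = s i then 1 else 0) := rfl

theorem simplePerm_mul_apply (i j : B) (x : W) (ε : ZMod 2) :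
    (cs.simplePerm i * cs.simplePerm j) (x, ε) =
      ((s i * s j) * x * (s i * s j)⁻¹,
        ε + (if x = s j then 1 else 0) + if x = (s i * s j)⁻¹ * s j then 1 else 0) := by
  rw [Equiv.Perm.mul_apply, simplePerm_apply, simplePerm_apply, simple_mul_mul_simple_eq_iff]
  simp [mul_assoc]

theorem simplePerm_mul_pow_apply (i j : B) (k : ℕ) (x : W) (ε : ZMod 2) :
    ((cs.simplePerm i * cs.simplePerm j) ^ k) (x, ε) =
      ((s i * s j) ^ k * x * ((s i * s j) ^ k)⁻¹,
        ε + ∑ q ∈ Finset.range (2 * k),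
          if x = ((s i * s j) ^ q)⁻¹ * s j then 1 else 0) := by
  set p := s i * s j with hp_def
  have hp : s j * p = p⁻¹ * s j := by simp [p, mul_assoc]
  induction k generalizing x ε with
  | zero => simp
  | succ k ih =>
    have hconj (q : ℕ) :
        p * x * p⁻¹ = (p ^ q)⁻¹ * s j ↔ x = (p ^ (q + 2))⁻¹ * s j := by
      rw [mul_mul_inv_eq_iff_eq_inv_mul_mul, mul_assoc, mul_assoc _ (s j), hp]
      group
    rw [pow_succ, Equiv.Perm.mul_apply, simplePerm_mul_apply, ih, ← hp_def, Prod.mk.injEq]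
    refine ⟨by group, ?_⟩
    rw [show 2 * (k + 1) = 2 * k + 1 + 1 by ring, Finset.sum_range_succ', Finset.sum_range_succ']
    simp only [hconj, pow_zero, zero_add, pow_one, inv_one, one_mul, add_assoc, Nat.reduceAdd]
    ring

theorem simplePerm_isLiftable : M.IsLiftable cs.simplePerm := by
  intro i j
  ext ⟨x, ε⟩ : 1
  have hp := cs.simple_mul_simple_pow i j
  -- the reflections indexed by `q` depend only on `q` modulo `M i j`, so each occurs twice
  rw [simplePerm_mul_pow_apply, two_mul, Finset.sum_range_add]
  simp [hp, pow_add, CharTwo.add_self_eq_zero]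

noncomputable def reflectionRep : W →* Equiv.Perm (W × ZMod 2) :=
  cs.lift ⟨cs.simplePerm, cs.simplePerm_isLiftable⟩

theorem reflectionRep_wordProd (ω : List B) (x : W) (ε : ZMod 2) :
    cs.reflectionRep (π ω) (x, ε) = (π ω * x * (π ω)⁻¹, ε + (ris ω).count x) := by
  induction ω generalizing ε with
  | nil => simp [wordProd_nil, rightInvSeq]
  | cons i ω ih =>
    rw [wordProd_cons, map_mul, Equiv.Perm.mul_apply, ih, reflectionRep, lift_apply_simple,
      simplePerm_apply, rightInvSeq, List.count_cons, mul_mul_inv_eq_iff_eq_inv_mul_mul]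
    simp only [beq_iff_eq, eq_comm (b := x), Nat.cast_add,
      Nat.cast_ite, Nat.cast_one, Nat.cast_zero, mul_inv_rev, inv_simple, mul_assoc, add_assoc]

noncomputable def inversionParity (w t : W) : ZMod 2 := (cs.reflectionRep w (t, 0)).2

theorem reflectionRep_apply (w x : W) (ε : ZMod 2) :
    cs.reflectionRep w (x, ε) = (w * x * w⁻¹, ε + cs.inversionParity w x) := by
  obtain ⟨ω, -, rfl⟩ := cs.exists_isReduced w
  simp [inversionParity, reflectionRep_wordProd]

theorem inversionParity_wordProd (ω : List B) (x : W) :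
    cs.inversionParity (π ω) x = (ris ω).count x := by
  simp [inversionParity, reflectionRep_wordProd]

theorem inversionParity_eq_zero_of_length_lt {w t : W} (h : ℓ w < ℓ (w * t)) :
    cs.inversionParity w t = 0 := by
  obtain ⟨ω, hω, rfl⟩ := cs.exists_isReduced w
  rw [inversionParity_wordProd, List.count_eq_zero_of_not_mem, Nat.cast_zero]
  intro hmem
  have := (cs.isRightInversion_of_mem_rightInvSeq hω hmem).2
  omega

theorem inversionParity_self {t : W} (ht : cs.IsReflection t) : cs.inversionParity t t = 1 := by
  obtain ⟨z, i, rfl⟩ := ht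
  have hz :
      cs.reflectionRep z (cs.reflectionRep z⁻¹ (z * s i * z⁻¹, 0)) = (z * s i * z⁻¹, 0) := by
    rw [← Equiv.Perm.mul_apply, ← map_mul, mul_inv_cancel, map_one, Equiv.Perm.one_apply]
  have hsimple : cs.reflectionRep (s i) = cs.simplePerm i := cs.lift_apply_simple _ i
  rw [inversionParity, map_mul, map_mul, Equiv.Perm.mul_apply, Equiv.Perm.mul_apply]
  rw [reflectionRep_apply cs z⁻¹, reflectionRep_apply cs z] at hz
  rw [reflectionRep_apply cs z⁻¹, hsimple, simplePerm_apply, reflectionRep_apply cs z]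
  have hback : z⁻¹ * (z * s i * z⁻¹) * z = s i := by group
  simp only [inv_inv, hback, Prod.mk.injEq, true_and, ↓reduceIte] at hz ⊢
  rw [simple_mul_simple_self, one_mul]
  linear_combination hz

theorem inversionParity_mul (u v x : W) :
    cs.inversionParity (u * v) x =
      cs.inversionParity v x + cs.inversionParity u (v * x * v⁻¹) := by
  have h := congrArg Prod.snd (cs.reflectionRep_apply (u * v) x 0)
  rw [map_mul, Equiv.Perm.mul_apply, reflectionRep_apply, reflectionRep_apply] at h
  simpa using h.symm

theorem inversionParity_eq_one_of_length_mul_lt {w t : W} (ht : cs.IsReflection t)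
    (h : ℓ (w * t) < ℓ w) : cs.inversionParity w t = 1 := by
  have hw : w * t * t = w := by rw [mul_assoc, ht.mul_self, mul_one]
  have hwt : ℓ (w * t) < ℓ (w * t * t) := by rwa [hw]
  rw [← hw, inversionParity_mul, inversionParity_self cs ht, ht.mul_self, one_mul, ht.inv,
    inversionParity_eq_zero_of_length_lt cs hwt, add_zero]

theorem mem_rightInvSeq_of_length_mul_lt {ω : List B} {t : W} (ht : cs.IsReflection t)
    (h : ℓ (π ω * t) < ℓ (π ω)) : t ∈ ris ω := by
  by_contra hmem
  have := cs.inversionParity_eq_one_of_length_mul_lt ht h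
  simp [inversionParity_wordProd, List.count_eq_zero_of_not_mem hmem] at this

end ReflectionRepresentation

theorem strong_exchange {ω : List B} {t : W} (ht : cs.IsReflection t)
    (h : ℓ (π ω * t) < ℓ (π ω)) : ∃ j < ω.length, π (ω.eraseIdx j) = π ω * t := by
  obtain ⟨j, hj, rfl⟩ := List.getElem_of_mem (cs.mem_rightInvSeq_of_length_mul_lt ht h)
  rw [length_rightInvSeq] at hj
  refine ⟨j, hj, ?_⟩
  rw [← wordProd_mul_getD_rightInvSeq, List.getD_eq_getElem]

def ReflectionStep (a b : W) : Prop := ∃ t, cs.IsReflection t ∧ b = a * t ∧ ℓ b < ℓ a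

def ChainLE (u w : W) : Prop := Relation.ReflTransGen cs.ReflectionStep w u

variable {cs}

theorem reflectionStep_mul_simple {w : W} {i : B} (h : ℓ (w * s i) < ℓ w) :
    cs.ReflectionStep w (w * s i) :=
  ⟨s i, cs.isReflection_simple i, rfl, h⟩

theorem reflectionStep_of_length_lt_mul_simple {w : W} {i : B} (h : ℓ w < ℓ (w * s i)) :
    cs.ReflectionStep (w * s i) w := by
  simpa using reflectionStep_mul_simple (cs := cs) (w := w * s i) (i := i) (by simpa using h)

theorem ChainLE.exists_sublist {u w : W} (h : cs.ChainLE u w) {ω : List B} (hω : π ω = w) :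
    ∃ ω', ω'.Sublist ω ∧ π ω' = u := by
  induction h with
  | refl => exact ⟨ω, List.Sublist.refl ω, hω⟩
  | tail _ hstep ih =>
    obtain ⟨ω', hsub, rfl⟩ := ih
    obtain ⟨t, ht, rfl, hlt⟩ := hstep
    obtain ⟨j, -, hj⟩ := cs.strong_exchange ht hlt
    exact ⟨ω'.eraseIdx j, (List.eraseIdx_sublist ω' j).trans hsub, hj⟩

-- The lifting property and `chainLE_wordProd_of_sublist_of_liftingUpTo` are proved by a joint
-- induction on the length.
variable (cs) in
def LiftingUpTo (n : ℕ) : Prop :=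
  ∀ (w u : W) (i : B), ℓ w ≤ n → ℓ (w * s i) < ℓ w →
    cs.ChainLE u w → cs.ChainLE (u * s i) w

theorem chainLE_wordProd_of_sublist_of_liftingUpTo {n : ℕ} (hlift : cs.LiftingUpTo n)
    {ω ω' : List B} (hω : cs.IsReduced ω) (hlen : ω.length ≤ n) (hsub : ω'.Sublist ω) :
    cs.ChainLE (π ω') (π ω) := by
  induction ω using List.reverseRecOn generalizing ω' with
  | nil =>
    rw [List.sublist_nil.mp hsub]
    exact Relation.ReflTransGen.refl
  | append_singleton ω c ih =>
    have hred : cs.IsReduced ω := by simpa using hω.take ω.length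
    have hdes : ℓ (π (ω ++ [c]) * s c) < ℓ (π (ω ++ [c])) := by
      rw [hω.eq, wordProd_append, wordProd_singleton, simple_mul_simple_cancel_right, hred.eq]
      simp
    have hstep : cs.ReflectionStep (π (ω ++ [c])) (π ω) := by
      simpa [wordProd_append] using reflectionStep_mul_simple hdes
    obtain ⟨l₁, l₂, rfl, hl₁, hl₂⟩ := List.sublist_append_iff.mp hsub
    have hl₁ω : cs.ChainLE (π l₁) (π (ω ++ [c])) :=
      Relation.ReflTransGen.head hstep (ih hred (by simp at hlen; omega) hl₁)
    rcases List.sublist_singleton.mp hl₂ with rfl | rfl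
    · simpa using hl₁ω
    · simpa [wordProd_append] using hlift _ _ c (hω.eq ▸ hlen) hdes hl₁ω

theorem ChainLE.mul_simple_of_liftingUpTo {n : ℕ} (hlift : cs.LiftingUpTo n) {u v : W} {i : B}
    (hu : cs.ChainLE u v) (hv : ℓ v ≤ n) (hvi : ℓ v < ℓ (v * s i)) :
    cs.ChainLE (u * s i) (v * s i) := by
  rcases hu.cases_head with rfl | ⟨v₁, ⟨t, ht, rfl, hlt⟩, hu₁⟩
  · exact Relation.ReflTransGen.refl
  have hstep := reflectionStep_of_length_lt_mul_simple hvi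
  rcases Nat.lt_or_gt_of_ne (cs.length_mul_simple_ne (v * t) i) with hdes | hasc
  · exact Relation.ReflTransGen.head hstep
      (Relation.ReflTransGen.head ⟨t, ht, rfl, hlt⟩ (hlift _ _ i (by omega) hdes hu₁))
  · have hlen := cs.length_mul_simple (v * t) i
    -- `v t s = (v s) (s t s)` sits between `v t` and `v s`
    have hstep' : cs.ReflectionStep (v * s i) (v * t * s i) :=
      ⟨s i * t * s i, by simpa using ht.conj (s i), by simp [mul_assoc], by omega⟩
    have hu' : cs.ChainLE u (v * t * s i) :=
      Relation.ReflTransGen.head (reflectionStep_of_length_lt_mul_simple hasc) hu₁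
    exact Relation.ReflTransGen.head hstep' (hlift _ _ i (by omega) (by simpa using hasc) hu')

theorem liftingUpTo (n : ℕ) : cs.LiftingUpTo n := by
  induction n with
  | zero =>
    intro w u i hw hdes
    omega
  | succ n ih =>
    intro w u i hw hdes hu
    have hlen : ℓ (w * s i) ≤ n := by
      have := cs.length_mul_simple w i
      omega
    obtain ⟨ω, hω, hωv⟩ := cs.exists_isReduced (w * s i)
    obtain ⟨ω', hsub, rfl⟩ :=
      hu.exists_sublist (ω := ω ++ [i]) (by simp [wordProd_append, ← hωv])
    obtain ⟨l₁, l₂, rfl, hl₁, hl₂⟩ := List.sublist_append_iff.mp hsub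
    have hl₁v : cs.ChainLE (π l₁) (w * s i) :=
      hωv ▸ chainLE_wordProd_of_sublist_of_liftingUpTo ih hω
        (by rwa [← hω.eq, ← hωv]) hl₁
    rcases List.sublist_singleton.mp hl₂ with rfl | rfl
    · simpa using hl₁v.mul_simple_of_liftingUpTo (i := i) ih hlen (by simpa using hdes)
    · simpa [wordProd_append, ChainLE] using
        Relation.ReflTransGen.head (reflectionStep_mul_simple hdes) hl₁v

theorem bruhatLE_iff_chainLE {u w : W} : BruhatLE cs u w ↔ cs.ChainLE u w := by
  constructor
  · rintro ⟨ω, hω, rfl, ω', hsub, rfl⟩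
    exact chainLE_wordProd_of_sublist_of_liftingUpTo (liftingUpTo _) hω le_rfl hsub
  · intro h
    obtain ⟨ω, hω, rfl⟩ := cs.exists_isReduced w
    obtain ⟨ω', hsub, rfl⟩ := h.exists_sublist rfl
    exact ⟨ω, hω, rfl, ω', hsub, rfl⟩

theorem _root_.BruhatLE.mul_simple_of_length_mul_lt {u w : W} {i : B} (h : BruhatLE cs u w)
    (hw : ℓ (w * s i) < ℓ w) : BruhatLE cs (u * s i) w :=
  bruhatLE_iff_chainLE.mpr (liftingUpTo _ w u i le_rfl hw (bruhatLE_iff_chainLE.mp h))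

theorem bruhatLE_mul_simple_of_length_mul_lt {w : W} {i : B} (h : ℓ (w * s i) < ℓ w) :
    BruhatLE cs (w * s i) w :=
  bruhatLE_iff_chainLE.mpr (Relation.ReflTransGen.single (reflectionStep_mul_simple h))

end CoxeterSystem

theorem essential_set_of_wmax_in_WJ_general
    {B W : Type*} [Group W] {M : CoxeterMatrix B} (cs : CoxeterSystem M W)
    (J : Set B) (w wmax v : W)
    (hmem : ∃ x ∈ Subgroup.closure (cs.simple '' J), wmax = w * x)
    (hmax : ∀ u : W, (∃ x ∈ Subgroup.closure (cs.simple '' J), u = w * x) →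
      cs.length u ≤ cs.length wmax)
    (hv : ¬ BruhatLE cs v wmax)
    (hmin : ∀ v' : W, ¬ BruhatLE cs v' wmax → BruhatLE cs v' v → v' = v) :
    ∀ i ∈ J, ¬ cs.length (v * cs.simple i) < cs.length v := by
  intro i hi hdes
  obtain ⟨x, hx, rfl⟩ := hmem
  have hsi : cs.simple i ∈ Subgroup.closure (cs.simple '' J) :=
    Subgroup.subset_closure ⟨i, hi, rfl⟩
  have hwmax : cs.length (w * x * cs.simple i) < cs.length (w * x) :=
    lt_of_le_of_ne (hmax _ ⟨x * cs.simple i, mul_mem hx hsi, mul_assoc _ _ _⟩)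
      (cs.length_mul_simple_ne _ i)
  have hbelow : BruhatLE cs (v * cs.simple i) (w * x) := by
    by_contra h
    exact hdes.ne (congrArg cs.length (hmin _ h (cs.bruhatLE_mul_simple_of_length_mul_lt hdes)))
  exact hv (by simpa using hbelow.mul_simple_of_length_mul_lt hwmax)

/-- If `v` is Bruhat-minimal among elements not below `w_max`, where `w_max` is the
maximal-length representative of the coset `w W_J`, then `v ∈ W^J`, i.e. `Des(v) ∩ J = ∅`. -/
theorem essential_set_of_wmax_in_WJ
    {B W : Type*} [Group W] [Finite W] {M : CoxeterMatrix B} (cs : CoxeterSystem M W)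
    (J : Set B) (w wmax v : W)
    (hmem : ∃ x ∈ Subgroup.closure (cs.simple '' J), wmax = w * x)
    (hmax : ∀ u : W, (∃ x ∈ Subgroup.closure (cs.simple '' J), u = w * x) →
      cs.length u ≤ cs.length wmax)
    (hv : ¬ BruhatLE cs v wmax)
    (hmin : ∀ v' : W, ¬ BruhatLE cs v' wmax → BruhatLE cs v' v → v' = v) :
    ∀ i ∈ J, ¬ cs.length (v * cs.simple i) < cs.length v :=
  essential_set_of_wmax_in_WJ_general cs J w wmax v hmem hmax hv hmin
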